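/- arXiv:0710.3008 — 4 statements merged into one kernel-verified Lean document; each statement's English description precedes it below -/
import Mathlib

section
/- Let g ≥ 2 and let d, d' be integers, with G_d := gcd(d − g + 1, 2g − 2) and G_{d'} := gcd(d' − g + 1, 2g − 2). Then G_d divides G_{d'} if and only if every stable vine curve of genus g that is d-special is also d'-special. -/
/-- `(g₁, g₂, k)` encodes a stable vine curve of genus `g`: two smooth irreducible
components of genera `g₁, g₂` meeting in `k` nodes. -/
def StableVine (g g₁ g₂ k : ℤ) : Prop :=
  0 ≤ g₁ ∧ 0 ≤ g₂ ∧ 1 ≤ k ∧ g = g₁ + g₂ + k - 1 ∧ ((g₁ = 0 ∨ g₂ = 0) → 3 ≤ k)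

/-- The Basic Inequality for a component of `ω`-degree `w`, with `k` nodes, on a curve of
genus `g`, for total degree `d` and partial degree `e`. -/
def BasicIneq (g d k w e : ℤ) : Prop :=
  (d : ℚ) * w / (2 * g - 2) - k / 2 ≤ e ∧ (e : ℚ) ≤ (d : ℚ) * w / (2 * g - 2) + k / 2

/-- The strict version of the Basic Inequality. -/
def BasicIneqStrict (g d k w e : ℤ) : Prop :=
  (d : ℚ) * w / (2 * g - 2) - k / 2 < e ∧ (e : ℚ) < (d : ℚ) * w / (2 * g - 2) + k / 2

/-- `(e₁, e₂)` is a balanced multidegree of total degree `d` on the vine curve `(g₁, g₂, k)`. -/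
def IsBalanced (g d g₁ g₂ k e₁ e₂ : ℤ) : Prop :=
  e₁ + e₂ = d ∧ BasicIneq g d k (2 * g₁ - 2 + k) e₁ ∧ BasicIneq g d k (2 * g₂ - 2 + k) e₂

/-- `(e₁, e₂)` is a stably balanced multidegree of total degree `d` on `(g₁, g₂, k)`. -/
def IsStablyBalanced (g d g₁ g₂ k e₁ e₂ : ℤ) : Prop :=
  e₁ + e₂ = d ∧ BasicIneqStrict g d k (2 * g₁ - 2 + k) e₁ ∧
    BasicIneqStrict g d k (2 * g₂ - 2 + k) e₂

/-- The vine curve `(g₁, g₂, k)` is `d`-special: it admits a balanced multidegree of total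
degree `d` which is not stably balanced. -/
def DSpecial (g d g₁ g₂ k : ℤ) : Prop :=
  ∃ e₁ e₂ : ℤ, IsBalanced g d g₁ g₂ k e₁ e₂ ∧ ¬ IsStablyBalanced g d g₁ g₂ k e₁ e₂

/-!
Write `D = 2g - 2`, `n = d - g + 1` and `w₁ = 2g₁ - 2 + k`. The deviations of `e₁` and
`e₂ = d - e₁` from their centres `d wᵢ / D` are opposite, so a vine curve is `d`-special exactly
when the endpoint `d w₁ / D - k / 2 = n w₁ / D + g₁ - 1` of the balanced range of `e₁` is an
integer, i.e. when `D ∣ n w₁`. Stable vine curves realise every weight `w₁ ∈ [1, D - 1]`, and the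
`w ∈ (0, D)` with `D ∣ n w` are the multiples of `D / gcd(n, D)`, so the `d`-special curves are
among the `d'`-special ones iff `gcd(n, D) ∣ gcd(n', D)`.
-/

lemma basicIneq_iff_abs_le (g d k w e : ℤ) :
    BasicIneq g d k w e ↔ |(e : ℚ) - d * w / (2 * g - 2)| ≤ k / 2 := by
  rw [BasicIneq, abs_sub_le_iff]
  constructor <;> rintro ⟨h₁, h₂⟩ <;> constructor <;> linarith

lemma basicIneqStrict_iff_abs_lt (g d k w e : ℤ) :
    BasicIneqStrict g d k w e ↔ |(e : ℚ) - d * w / (2 * g - 2)| < k / 2 := by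
  rw [BasicIneqStrict, abs_sub_lt_iff]
  constructor <;> rintro ⟨h₁, h₂⟩ <;> constructor <;> linarith

lemma dSpecial_iff_exists_abs_eq {g d g₁ g₂ k : ℤ} (hg : g ≠ 1) (hgen : g = g₁ + g₂ + k - 1) :
    DSpecial g d g₁ g₂ k ↔
      ∃ e : ℤ, |(e : ℚ) - d * ((2 * g₁ - 2 + k : ℤ) : ℚ) / (2 * g - 2)| = k / 2 := by
  have hg' : (g : ℚ) - 1 ≠ 0 := sub_ne_zero.2 (by exact_mod_cast hg)
  have hgq : (g : ℚ) = g₁ + g₂ + k - 1 := by exact_mod_cast hgen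
  have hdev : ∀ e : ℤ, |((d - e : ℤ) : ℚ) - d * ((2 * g₂ - 2 + k : ℤ) : ℚ) / (2 * g - 2)| =
      |(e : ℚ) - d * ((2 * g₁ - 2 + k : ℤ) : ℚ) / (2 * g - 2)| := by
    intro e
    rw [← abs_neg]
    congr 1
    field_simp
    push_cast
    linear_combination -2 * (d : ℚ) * hgq
  constructor
  · rintro ⟨e₁, e₂, ⟨hsum, hb₁, hb₂⟩, hns⟩
    obtain rfl : e₂ = d - e₁ := by omega
    rw [basicIneq_iff_abs_le] at hb₁ hb₂
    refine ⟨e₁, hb₁.eq_of_not_lt fun hlt => hns ⟨hsum, ?_, ?_⟩⟩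
    · exact (basicIneqStrict_iff_abs_lt ..).2 hlt
    · exact (basicIneqStrict_iff_abs_lt ..).2 (hdev e₁ ▸ hlt)
  · rintro ⟨e, he⟩
    refine ⟨e, d - e, ⟨by ring, ?_, ?_⟩, fun ⟨_, hs, _⟩ => ?_⟩
    · exact (basicIneq_iff_abs_le ..).2 he.le
    · exact (basicIneq_iff_abs_le ..).2 (hdev e ▸ he.le)
    · exact ((basicIneqStrict_iff_abs_lt ..).1 hs).ne he

lemma exists_intCast_eq_div_iff {a b : ℤ} (hb : b ≠ 0) :
    (∃ m : ℤ, (m : ℚ) = a / b) ↔ b ∣ a := by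
  constructor
  · rintro ⟨m, hm⟩
    refine ⟨m, ?_⟩
    rw [eq_div_iff (by exact_mod_cast hb)] at hm
    exact_mod_cast (by linarith : (a : ℚ) = b * m)
  · rintro ⟨m, rfl⟩
    exact ⟨m, by push_cast; field_simp⟩

lemma dSpecial_iff_dvd {g d g₁ g₂ k : ℤ} (hg : g ≠ 1) (hv : StableVine g g₁ g₂ k) :
    DSpecial g d g₁ g₂ k ↔ 2 * g - 2 ∣ (d - g + 1) * (2 * g₁ - 2 + k) := by
  obtain ⟨-, -, hk₁, hgen, -⟩ := hv
  have hg' : (g : ℚ) - 1 ≠ 0 := sub_ne_zero.2 (by exact_mod_cast hg)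
  have hk : (0 : ℚ) ≤ k / 2 := by
    have : (1 : ℚ) ≤ k := by exact_mod_cast hk₁
    linarith
  have hend : (d : ℚ) * ((2 * g₁ - 2 + k : ℤ) : ℚ) / (2 * g - 2) - k / 2 =
      (d - g + 1) * (2 * g₁ - 2 + k) / (2 * g - 2) + (g₁ - 1) := by
    field_simp
    push_cast
    ring
  rw [dSpecial_iff_exists_abs_eq hg hgen, ← exists_intCast_eq_div_iff (by omega)]
  constructor
  · rintro ⟨e, he⟩
    rcases (abs_eq hk).1 he with he | he
    · exact ⟨e - k - g₁ + 1, by push_cast; linarith⟩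
    · exact ⟨e - g₁ + 1, by push_cast; linarith⟩
  · rintro ⟨m, hm⟩
    refine ⟨m + g₁ - 1, ?_⟩
    rw [abs_eq hk]
    right
    push_cast at hend hm ⊢
    linarith

lemma exists_stableVine_weight_eq {g w : ℤ} (h₁ : 1 ≤ w) (h₂ : w ≤ 2 * g - 3) :
    ∃ g₁ g₂ k : ℤ, StableVine g g₁ g₂ k ∧ 2 * g₁ - 2 + k = w := by
  rcases Int.even_or_odd w with ⟨m, hm⟩ | ⟨m, hm⟩
  · exact ⟨m, g - m - 1, 2, ⟨by omega, by omega, by omega, by omega, by omega⟩, by omega⟩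
  · exact ⟨m + 1, g - m - 1, 1, ⟨by omega, by omega, by omega, by omega, by omega⟩, by omega⟩

lemma dvd_mul_of_gcd_dvd_gcd {n n' D w : ℤ} (h : Int.gcd n D ∣ Int.gcd n' D)
    (hw : D ∣ n * w) : D ∣ n' * w := by
  have hGw : D ∣ (Int.gcd n D : ℤ) * w := by
    rw [Int.coe_gcd, gcd_comm]
    exact dvd_gcd_mul_iff_dvd_mul.2 hw
  exact hGw.trans <| (mul_dvd_mul_right (Int.natCast_dvd_natCast.2 h) w).trans
    (mul_dvd_mul_right (Int.gcd_dvd_left _ _) w)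

lemma gcd_dvd_gcd_of_forall_dvd_mul {n n' D : ℤ} (hD : 0 < D)
    (h : ∀ w, 0 < w → w < D → D ∣ n * w → D ∣ n' * w) : Int.gcd n D ∣ Int.gcd n' D := by
  set G := Int.gcd n D
  obtain hG | hG := eq_or_ne G 1
  · rw [hG]
    exact one_dvd _
  have hG₂ : (2 : ℤ) ≤ G := by
    have := Int.gcd_pos_of_ne_zero_right n hD.ne'
    omega
  obtain ⟨a, ha⟩ : (G : ℤ) ∣ D := Int.gcd_dvd_right _ _
  obtain ⟨t, ht⟩ : (G : ℤ) ∣ n := Int.gcd_dvd_left _ _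
  have ha₀ : 0 < a := by nlinarith
  have hna : D ∣ n * a := ⟨t, by rw [ha, ht]; ring⟩
  have hn'a : (G : ℤ) * a ∣ n' * a := ha ▸ h a ha₀ (by nlinarith) hna
  exact Int.dvd_gcd ((mul_dvd_mul_iff_right ha₀.ne').1 hn'a) (Int.gcd_dvd_right _ _)

/-- Proposition 2.12 (vine-curve form): `G_d ∣ G_{d'}` iff every `d`-special stable vine
curve of genus `g` is `d'`-special. -/
theorem stmt_1 (g d d' : ℤ) (hg : 2 ≤ g) :
    Int.gcd (d - g + 1) (2 * g - 2) ∣ Int.gcd (d' - g + 1) (2 * g - 2) ↔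
      ∀ g₁ g₂ k : ℤ, StableVine g g₁ g₂ k → DSpecial g d g₁ g₂ k →
        DSpecial g d' g₁ g₂ k := by
  have hg₁ : g ≠ 1 := by omega
  constructor
  · intro h g₁ g₂ k hv
    rw [dSpecial_iff_dvd hg₁ hv, dSpecial_iff_dvd hg₁ hv]
    exact dvd_mul_of_gcd_dvd_gcd h
  · intro H
    refine gcd_dvd_gcd_of_forall_dvd_mul (by omega) fun w hw₀ hwD hdw => ?_
    obtain ⟨g₁, g₂, k, hv, rfl⟩ := exists_stableVine_weight_eq (g := g) hw₀ (by omega)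
    rw [← dSpecial_iff_dvd hg₁ hv] at hdw ⊢
    exact H g₁ g₂ k hv hdw
end

section
/- Let g ≥ 2 and d be integers and let (g₁, g₂, k) be a stable vine curve of genus g. Then there exist two distinct balanced multidegrees (e₁, e₂) and (e₁', e₂') of total degree d with k dividing e₁ − e₁' if and only if (g₁, g₂, k) is d-special. -/
/-!
With `e₂ = d - e₁`, the two Basic Inequalities coincide (because `w₁ + w₂ = 2g - 2`), so
balancedness confines `e₁` to a closed interval of length `k` and stable balancedness to its
interior. Two distinct integers of such an interval that are congruent modulo `k` differ by
exactly `k`, hence one of them is an endpoint; conversely an integer endpoint `e₁` yields the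
second balanced multidegree `e₁ ± k`.
-/

open Set

theorem Int.exists_ne_dvd_sub_mem_Icc_iff {α : Type*} [Field α] [LinearOrder α]
    [IsStrictOrderedRing α] {a : α} {k : ℤ} (hk : 0 < k) :
    (∃ e e' : ℤ, (e : α) ∈ Icc a (a + k) ∧ (e' : α) ∈ Icc a (a + k) ∧ e ≠ e' ∧ k ∣ e - e') ↔
      ∃ e : ℤ, (e : α) ∈ Icc a (a + k) \ Ioo a (a + k) := by
  constructor
  · rintro ⟨e, e', ⟨he₁, he₂⟩, ⟨he₁', he₂'⟩, hne, hdvd⟩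
    have hgap : k ≤ |e - e'| :=
      Int.le_of_dvd (abs_pos.2 (sub_ne_zero.2 hne)) ((dvd_abs _ _).2 hdvd)
    refine ⟨e, ⟨he₁, he₂⟩, fun ⟨hlo, hhi⟩ => ?_⟩
    rcases le_abs'.1 hgap with h | h
    · have : (k : α) ≤ e' - e := by exact_mod_cast (by linarith : k ≤ e' - e)
      linarith
    · have : (k : α) ≤ e - e' := by exact_mod_cast h
      linarith
  · rintro ⟨e, hbd⟩
    have he := hbd.1
    have hkα : (0 : α) < k := by exact_mod_cast hk
    rw [Icc_sdiff_Ioo_same (by simp [hk.le]), mem_insert_iff, mem_singleton_iff] at hbd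
    rcases hbd with h | h
    · refine ⟨e, e + k, he, ?_, by omega, ⟨-1, by ring⟩⟩
      push_cast
      constructor <;> linarith
    · refine ⟨e, e - k, he, ?_, by omega, ⟨1, by ring⟩⟩
      push_cast
      constructor <;> linarith

variable {g d k w w₁ w₂ e : ℤ}

theorem basicIneq_iff_mem_Icc :
    BasicIneq g d k w e ↔
      (e : ℚ) ∈ Icc ((d : ℚ) * w / (2 * g - 2) - k / 2) (d * w / (2 * g - 2) - k / 2 + k) := by
  simp only [BasicIneq, mem_Icc]
  constructor <;> rintro ⟨h₁, h₂⟩ <;> constructor <;> linarith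

theorem basicIneqStrict_iff_mem_Ioo :
    BasicIneqStrict g d k w e ↔
      (e : ℚ) ∈ Ioo ((d : ℚ) * w / (2 * g - 2) - k / 2) (d * w / (2 * g - 2) - k / 2 + k) := by
  simp only [BasicIneqStrict, mem_Ioo]
  constructor <;> rintro ⟨h₁, h₂⟩ <;> constructor <;> linarith

theorem mul_div_eq_sub_mul_div_of_add_eq (hg : g ≠ 1) (hw : w₁ + w₂ = 2 * g - 2) :
    (d : ℚ) * w₂ / (2 * g - 2) = d - d * w₁ / (2 * g - 2) := by
  have h : (2 : ℚ) * g - 2 ≠ 0 := by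
    intro h; apply hg; exact_mod_cast (by linarith : (g : ℚ) = 1)
  rw [eq_sub_iff_add_eq, ← add_div, div_eq_iff h, ← mul_add, ← Int.cast_add, add_comm, hw]
  push_cast
  ring

theorem basicIneq_sub_iff (hg : g ≠ 1) (hw : w₁ + w₂ = 2 * g - 2) :
    BasicIneq g d k w₂ (d - e) ↔ BasicIneq g d k w₁ e := by
  simp only [BasicIneq, mul_div_eq_sub_mul_div_of_add_eq hg hw, Int.cast_sub]
  constructor <;> rintro ⟨h₁, h₂⟩ <;> constructor <;> linarith

theorem basicIneqStrict_sub_iff (hg : g ≠ 1) (hw : w₁ + w₂ = 2 * g - 2) :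
    BasicIneqStrict g d k w₂ (d - e) ↔ BasicIneqStrict g d k w₁ e := by
  simp only [BasicIneqStrict, mul_div_eq_sub_mul_div_of_add_eq hg hw, Int.cast_sub]
  constructor <;> rintro ⟨h₁, h₂⟩ <;> constructor <;> linarith

theorem exists_ne_basicIneq_dvd_sub_iff (hk : 0 < k) :
    (∃ e e' : ℤ, BasicIneq g d k w e ∧ BasicIneq g d k w e' ∧ e ≠ e' ∧ k ∣ e - e') ↔
      ∃ e : ℤ, BasicIneq g d k w e ∧ ¬BasicIneqStrict g d k w e := by
  simpa only [basicIneq_iff_mem_Icc, basicIneqStrict_iff_mem_Ioo, mem_sdiff] using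
    Int.exists_ne_dvd_sub_mem_Icc_iff hk

variable {g₁ g₂ e₁ e₂ : ℤ}

theorem isBalanced_iff (hg : g ≠ 1) (hsum : g = g₁ + g₂ + k - 1) :
    IsBalanced g d g₁ g₂ k e₁ e₂ ↔ e₂ = d - e₁ ∧ BasicIneq g d k (2 * g₁ - 2 + k) e₁ := by
  constructor
  · rintro ⟨hd, h₁, -⟩
    exact ⟨by omega, h₁⟩
  · rintro ⟨rfl, h₁⟩
    exact ⟨by ring, h₁, (basicIneq_sub_iff hg (by omega)).2 h₁⟩

theorem isStablyBalanced_iff (hg : g ≠ 1) (hsum : g = g₁ + g₂ + k - 1) :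
    IsStablyBalanced g d g₁ g₂ k e₁ e₂ ↔
      e₂ = d - e₁ ∧ BasicIneqStrict g d k (2 * g₁ - 2 + k) e₁ := by
  constructor
  · rintro ⟨hd, h₁, -⟩
    exact ⟨by omega, h₁⟩
  · rintro ⟨rfl, h₁⟩
    exact ⟨by ring, h₁, (basicIneqStrict_sub_iff hg (by omega)).2 h₁⟩

/-- Remark 1.2 (vine-curve form): there exist two distinct balanced multidegrees of total
degree `d` that are equivalent up to twisters (i.e. with `k ∣ e₁ - e₁'`) iff the curve is
`d`-special. -/
theorem stmt_12 (g d : ℤ) (hg : 2 ≤ g) (g₁ g₂ k : ℤ) (hvine : StableVine g g₁ g₂ k) :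
    (∃ e₁ e₂ e₁' e₂' : ℤ, IsBalanced g d g₁ g₂ k e₁ e₂ ∧ IsBalanced g d g₁ g₂ k e₁' e₂' ∧
      ¬(e₁ = e₁' ∧ e₂ = e₂') ∧ k ∣ e₁ - e₁') ↔
      DSpecial g d g₁ g₂ k := by
  obtain ⟨-, -, hk, hsum, -⟩ := hvine
  have hg₁ : g ≠ 1 := by omega
  have key := exists_ne_basicIneq_dvd_sub_iff (g := g) (d := d) (w := 2 * g₁ - 2 + k)
    (by omega : 0 < k)
  simp only [DSpecial, isBalanced_iff hg₁ hsum, isStablyBalanced_iff hg₁ hsum]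
  constructor
  · rintro ⟨e₁, _, e₁', _, ⟨rfl, he₁⟩, ⟨rfl, he₁'⟩, hne, hdvd⟩
    obtain ⟨e, he, hstrict⟩ := key.1 ⟨e₁, e₁', he₁, he₁', fun h => hne ⟨h, h ▸ rfl⟩, hdvd⟩
    exact ⟨e, _, ⟨rfl, he⟩, fun h => hstrict h.2⟩
  · rintro ⟨e, _, ⟨rfl, he⟩, hstrict⟩
    obtain ⟨e₁, e₁', he₁, he₁', hne, hdvd⟩ := key.2 ⟨e, he, fun h => hstrict ⟨rfl, h⟩⟩
    exact ⟨e₁, _, e₁', _, ⟨rfl, he₁⟩, ⟨rfl, he₁'⟩, fun h => hne h.1, hdvd⟩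
end

section
/- Let g ≥ 2 and d be integers with (2g − 2) dividing (d − g + 1) (equivalently, d ≡ g − 1 (mod 2g − 2)). Then every stable vine curve of genus g is d-special. -/
/-! Write `d = (2g - 2)m + (g - 1)`. Then `d·w/(2g - 2) = m·w + w/2`, and for `w = w₁` this is
`m·w₁ + g₁ - 1 + k/2`, so the upper bound of the Basic Inequality on the first component is the
integer `m·w₁ + g₁ - 1 + k`. Putting that degree on the first component forces the complementary
degree onto the lower bound of the second one, because the two centres `d·wᵢ/(2g - 2)` add up
to `d`. -/

section BasicIneq

variable {g d k w e : ℤ}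

theorem basicIneq_of_eq_upper (hk : 0 ≤ k) (he : (e : ℚ) = d * w / (2 * g - 2) + k / 2) :
    BasicIneq g d k w e := by
  have : (0 : ℚ) ≤ k := mod_cast hk
  constructor <;> linarith

theorem basicIneq_of_eq_lower (hk : 0 ≤ k) (he : (e : ℚ) = d * w / (2 * g - 2) - k / 2) :
    BasicIneq g d k w e := by
  have : (0 : ℚ) ≤ k := mod_cast hk
  constructor <;> linarith

theorem not_basicIneqStrict_of_eq_upper (he : (e : ℚ) = d * w / (2 * g - 2) + k / 2) :
    ¬ BasicIneqStrict g d k w e :=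
  fun h ↦ h.2.ne he

end BasicIneq

theorem cast_mul_div_eq_of_sub_eq_mul {g d m : ℤ} (hg : (2 * g - 2 : ℚ) ≠ 0)
    (hm : d - g + 1 = (2 * g - 2) * m) (w : ℤ) : (d : ℚ) * w / (2 * g - 2) = m * w + w / 2 := by
  have hmQ : (d - g + 1 : ℚ) = (2 * g - 2) * m := mod_cast hm
  rw [div_eq_iff hg]
  linear_combination w * hmQ

theorem cast_mul_div_add_cast_mul_div {g d w₁ w₂ : ℤ} (hg : (2 * g - 2 : ℚ) ≠ 0)
    (hw : w₁ + w₂ = 2 * g - 2) :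
    (d : ℚ) * w₁ / (2 * g - 2) + d * w₂ / (2 * g - 2) = d := by
  have hwQ : (w₁ + w₂ : ℚ) = 2 * g - 2 := mod_cast hw
  rw [← add_div, ← mul_add, hwQ, mul_div_cancel_right₀ _ hg]

/-- Remark 2.8 (vine-curve form): if `d ≡ g - 1 (mod 2g - 2)` then every stable vine curve
of genus `g` is `d`-special. -/
theorem stmt_14 (g d : ℤ) (hg : 2 ≤ g) (hd : 2 * g - 2 ∣ d - g + 1) :
    ∀ g₁ g₂ k : ℤ, StableVine g g₁ g₂ k → DSpecial g d g₁ g₂ k := by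
  rintro g₁ g₂ k ⟨-, -, hk, hgenus, -⟩
  obtain ⟨m, hm⟩ := hd
  have hne : (2 * g - 2 : ℚ) ≠ 0 := by
    have : (2 : ℚ) ≤ g := mod_cast hg
    linarith
  set e₁ := m * (2 * g₁ - 2 + k) + g₁ - 1 + k with he₁_def
  have he₁ : (e₁ : ℚ) = d * (2 * g₁ - 2 + k : ℤ) / (2 * g - 2) + k / 2 := by
    rw [cast_mul_div_eq_of_sub_eq_mul hne hm, he₁_def]
    push_cast
    ring
  have he₂ : ((d - e₁ : ℤ) : ℚ) = d * (2 * g₂ - 2 + k : ℤ) / (2 * g - 2) - k / 2 := by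
    have := cast_mul_div_add_cast_mul_div (d := d) hne
      (show (2 * g₁ - 2 + k) + (2 * g₂ - 2 + k) = 2 * g - 2 by omega)
    push_cast at this he₁ ⊢
    linarith
  refine ⟨e₁, d - e₁, ⟨add_sub_cancel e₁ d, ?_, ?_⟩, fun h ↦ ?_⟩
  · exact basicIneq_of_eq_upper (by omega) he₁
  · exact basicIneq_of_eq_lower (by omega) he₂
  · exact not_basicIneqStrict_of_eq_upper he₁ h.2.1
end

section
/- Let g ≥ 2 be an even integer. Then a stable vine curve (g₁, g₂, k) of genus g is 1-special if and only if g₁ = g₂; moreover, in that case k is odd. -/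
/-! For `d = 1` the Basic Inequality of a component of `ω`-degree `w` is centred at
`w / (2g - 2)`, which lies strictly between `0` and `1` on a stable vine curve. A bound
`w / (2g - 2) ± k / 2` equals an integer `e` only if `w / (2g - 2) = (2e ∓ k) / 2` with
`0 < 2e ∓ k < 2`, so `2e ∓ k = 1`: then `w = g - 1`, i.e. `g₁ = g₂`, and `k` is odd.
Conversely, if `g₁ = g₂` and `g` is even then `k = 2t + 1`, and the multidegree `(-t, t + 1)`
attains the bounds `1/2 ∓ k/2`. -/

namespace StableVine

variable {g g₁ g₂ k : ℤ}

lemma swap (h : StableVine g g₁ g₂ k) : StableVine g g₂ g₁ k := by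
  obtain ⟨h₁, h₂, hk, hg, hst⟩ := h
  exact ⟨h₂, h₁, hk, by omega, fun h0 => hst h0.symm⟩

lemma omega_degree_pos (h : StableVine g g₁ g₂ k) : 0 < 2 * g₁ - 2 + k := by
  obtain ⟨h₁, -, hk, -, hst⟩ := h
  rcases eq_or_lt_of_le h₁ with h0 | h0
  · have := hst (Or.inl h0.symm)
    omega
  · omega

lemma omega_degree_lt (h : StableVine g g₁ g₂ k) : 2 * g₁ - 2 + k < 2 * g - 2 := by
  have := h.swap.omega_degree_pos
  obtain ⟨-, -, -, hg, -⟩ := h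
  omega

lemma two_le_genus (h : StableVine g g₁ g₂ k) : 2 ≤ g := by
  have := h.omega_degree_pos
  have := h.omega_degree_lt
  omega

end StableVine

lemma two_mul_eq_and_eq_one_of_div_eq_half {w q m : ℤ} (hw : 0 < w) (hwq : w < q)
    (h : (w : ℚ) / q = m / 2) : 2 * w = q ∧ m = 1 := by
  have hq : (q : ℚ) ≠ 0 := by exact_mod_cast (hw.trans hwq).ne'
  have hwm : 2 * w = m * q := by
    field_simp at h
    have h' : (2 * w : ℚ) = m * q := by linarith
    exact_mod_cast h'
  have hm : m = 1 := by
    have : 0 < m := by nlinarith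
    have : m < 2 := by nlinarith
    omega
  exact ⟨by rw [hwm, hm, one_mul], hm⟩

lemma BasicIneq.eq_sub_or_eq_add_of_not_strict {g d k w e : ℤ} (h : BasicIneq g d k w e)
    (hs : ¬ BasicIneqStrict g d k w e) :
    (d : ℚ) * w / (2 * g - 2) - k / 2 = e ∨ (e : ℚ) = (d : ℚ) * w / (2 * g - 2) + k / 2 := by
  by_contra! hne
  exact hs ⟨lt_of_le_of_ne h.1 hne.1, lt_of_le_of_ne h.2 hne.2⟩

lemma BasicIneq.two_mul_eq_and_odd_of_not_strict {g k w e : ℤ} (hw : 0 < w)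
    (hwg : w < 2 * g - 2) (h : BasicIneq g 1 k w e) (hs : ¬ BasicIneqStrict g 1 k w e) :
    2 * w = 2 * g - 2 ∧ Odd k := by
  rcases h.eq_sub_or_eq_add_of_not_strict hs with hb | hb
  · obtain ⟨hw2, hm⟩ := two_mul_eq_and_eq_one_of_div_eq_half (m := 2 * e + k) hw hwg
      (by push_cast [one_mul] at hb ⊢; linarith)
    exact ⟨hw2, -e, by omega⟩
  · obtain ⟨hw2, hm⟩ := two_mul_eq_and_eq_one_of_div_eq_half (m := 2 * e - k) hw hwg
      (by push_cast [one_mul] at hb ⊢; linarith)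
    exact ⟨hw2, e - 1, by omega⟩

lemma basicIneq_of_sub_eq {g d k w e : ℤ} (hk : 0 ≤ k)
    (h : (d : ℚ) * w / (2 * g - 2) - k / 2 = e) : BasicIneq g d k w e := by
  have : (0 : ℚ) ≤ k := by exact_mod_cast hk
  constructor <;> linarith

lemma basicIneq_of_eq_add {g d k w e : ℤ} (hk : 0 ≤ k)
    (h : (e : ℚ) = (d : ℚ) * w / (2 * g - 2) + k / 2) : BasicIneq g d k w e := by
  have : (0 : ℚ) ≤ k := by exact_mod_cast hk
  constructor <;> linarith

lemma one_mul_div_eq_half {g w : ℤ} (hg : 2 ≤ g) (hw : w = g - 1) :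
    ((1 : ℤ) : ℚ) * w / (2 * g - 2) = 1 / 2 := by
  have : (2 * g - 2 : ℚ) ≠ 0 := by
    have : (2 : ℚ) ≤ g := by exact_mod_cast hg
    linarith
  rw [div_eq_iff this, hw]
  push_cast
  ring

namespace StableVine

variable {g g₁ g₂ k : ℤ}

lemma eq_and_odd_of_dSpecial_one (hv : StableVine g g₁ g₂ k) (h : DSpecial g 1 g₁ g₂ k) :
    g₁ = g₂ ∧ Odd k := by
  obtain ⟨e₁, e₂, ⟨hsum, h₁, h₂⟩, hns⟩ := h
  have hcentre : (2 * g₁ - 2 + k = g - 1 ∨ 2 * g₂ - 2 + k = g - 1) ∧ Odd k := by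
    by_cases hs₁ : BasicIneqStrict g 1 k (2 * g₁ - 2 + k) e₁
    · have hs₂ : ¬ BasicIneqStrict g 1 k (2 * g₂ - 2 + k) e₂ := fun hs₂ => hns ⟨hsum, hs₁, hs₂⟩
      obtain ⟨hw, hk⟩ := h₂.two_mul_eq_and_odd_of_not_strict hv.swap.omega_degree_pos
        hv.swap.omega_degree_lt hs₂
      exact ⟨Or.inr (by omega), hk⟩
    · obtain ⟨hw, hk⟩ := h₁.two_mul_eq_and_odd_of_not_strict hv.omega_degree_pos
        hv.omega_degree_lt hs₁
      exact ⟨Or.inl (by omega), hk⟩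
  obtain ⟨-, -, -, hg, -⟩ := hv
  exact ⟨by omega, hcentre.2⟩

lemma dSpecial_one_of_eq (hv : StableVine g g₁ g₂ k) (heven : Even g) (h : g₁ = g₂) :
    DSpecial g 1 g₁ g₂ k := by
  have hg := hv.two_le_genus
  obtain ⟨-, -, hk, hgk, -⟩ := hv
  subst h
  obtain ⟨c, hc⟩ := heven
  obtain ⟨t, rfl⟩ : ∃ t, k = 2 * t + 1 := ⟨c - g₁, by omega⟩
  have hhalf := one_mul_div_eq_half (w := 2 * g₁ - 2 + (2 * t + 1)) hg (by omega)
  have hlow : ((1 : ℤ) : ℚ) * ((2 * g₁ - 2 + (2 * t + 1) : ℤ) : ℚ) / (2 * g - 2)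
      - ((2 * t + 1 : ℤ) : ℚ) / 2 = ((-t : ℤ) : ℚ) := by
    rw [hhalf]; push_cast; ring
  refine ⟨-t, t + 1, ⟨by ring, basicIneq_of_sub_eq (by omega) hlow,
    basicIneq_of_eq_add (by omega) (by rw [hhalf]; push_cast; ring)⟩, ?_⟩
  rintro ⟨-, hs₁, -⟩
  exact hs₁.1.ne hlow

end StableVine

theorem stmt_16_general (g : ℤ) (heven : Even g) (g₁ g₂ k : ℤ)
    (hvine : StableVine g g₁ g₂ k) :
    (DSpecial g 1 g₁ g₂ k ↔ g₁ = g₂) ∧ (DSpecial g 1 g₁ g₂ k → Odd k) :=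
  ⟨⟨fun h => (hvine.eq_and_odd_of_dSpecial_one h).1, hvine.dSpecial_one_of_eq heven⟩,
    fun h => (hvine.eq_and_odd_of_dSpecial_one h).2⟩

/-- Example 2.4 (vine-curve form), even genus: a stable vine curve of genus `g` is
`1`-special iff its two components have the same genus, in which case `k` is odd. -/
theorem stmt_16 (g : ℤ) (hg : 2 ≤ g) (heven : Even g) (g₁ g₂ k : ℤ)
    (hvine : StableVine g g₁ g₂ k) :
    (DSpecial g 1 g₁ g₂ k ↔ g₁ = g₂) ∧ (DSpecial g 1 g₁ g₂ k → Odd k) :=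
  stmt_16_general g heven g₁ g₂ k hvine
end
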